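/- arXiv:2105.14665 — 7 statements merged into one kernel-verified Lean document; each statement's English description precedes it below -/
import Mathlib

section
/- Let (J, u, ω, h, P) be a classical solution of the planar non-resistive MHD system in Lagrangian coordinates on ℝ × (0,T) with J > 0 and ρ₀ > 0 everywhere, with ρ₀ differentiable and all partial derivatives appearing below existing and continuous. Then the transverse effective viscous flux F := μ ∂_y ω / J + h/(4π) satisfies pointwise: ∂_t F − (μ/J) ∂_y( ∂_y F / ρ₀ ) = −(∂_y u / J) F + (1/(4π)) ∂_y ω / J. -/
open Real MeasureTheory
open scoped InnerProductSpace

noncomputable section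

/-- The plane `ℝ²` as a Euclidean space, target of the transverse velocity and
magnetic field. -/
abbrev E2 := EuclideanSpace ℝ (Fin 2)

/-- Partial derivative in time of a scalar field `f = f(y, t)`. -/
def pdt (f : ℝ → ℝ → ℝ) (y t : ℝ) : ℝ := deriv (fun s => f y s) t

/-- Partial derivative in space of a scalar field `f = f(y, t)`. -/
def pdy (f : ℝ → ℝ → ℝ) (y t : ℝ) : ℝ := deriv (fun z => f z t) y

/-- Partial derivative in time of an `ℝ²`-valued field. -/
def pdtV (f : ℝ → ℝ → E2) (y t : ℝ) : E2 := deriv (fun s => f y s) t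

/-- Partial derivative in space of an `ℝ²`-valued field. -/
def pdyV (f : ℝ → ℝ → E2) (y t : ℝ) : E2 := deriv (fun z => f z t) y

/-- `(J, u, ω, h, P)` is a classical solution of the planar non-resistive MHD system in
Lagrangian coordinates, for times in the set `S`: all the unknowns are twice continuously
differentiable (in particular all partial derivatives appearing in the system exist and
are continuous) and the five equations hold pointwise. -/
structure IsMHDSolution (lam mu gam : ℝ) (ρ₀ : ℝ → ℝ)
    (J u P : ℝ → ℝ → ℝ) (ω h : ℝ → ℝ → E2) (S : Set ℝ) : Prop where
  smooth_J : ContDiffOn ℝ 2 (fun p : ℝ × ℝ => J p.1 p.2) (Set.univ ×ˢ S)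
  smooth_u : ContDiffOn ℝ 2 (fun p : ℝ × ℝ => u p.1 p.2) (Set.univ ×ˢ S)
  smooth_P : ContDiffOn ℝ 2 (fun p : ℝ × ℝ => P p.1 p.2) (Set.univ ×ˢ S)
  smooth_ω : ContDiffOn ℝ 2 (fun p : ℝ × ℝ => ω p.1 p.2) (Set.univ ×ˢ S)
  smooth_h : ContDiffOn ℝ 2 (fun p : ℝ × ℝ => h p.1 p.2) (Set.univ ×ˢ S)
  /-- (i) `∂ₜ J = ∂_y u` -/
  mass : ∀ y : ℝ, ∀ t ∈ S, pdt J y t = pdy u y t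
  /-- (ii) `ρ₀ ∂ₜ u − λ ∂_y(∂_y u / J) + ∂_y P + (1/(4π)) h·∂_y h = 0` -/
  momentum : ∀ y : ℝ, ∀ t ∈ S,
    ρ₀ y * pdt u y t - lam * pdy (fun z s => pdy u z s / J z s) y t
      + pdy P y t + (1 / (4 * π)) * ⟪h y t, pdyV h y t⟫_ℝ = 0
  /-- (iii) `ρ₀ ∂ₜ ω − μ ∂_y(∂_y ω / J) = (1/(4π)) ∂_y h` -/
  momentumT : ∀ y : ℝ, ∀ t ∈ S,
    ρ₀ y • pdtV ω y t - mu • pdyV (fun z s => (J z s)⁻¹ • pdyV ω z s) y t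
      = (1 / (4 * π)) • pdyV h y t
  /-- (iv) `∂ₜ h + (∂_y u / J) h − ∂_y ω / J = 0` -/
  magnetic : ∀ y : ℝ, ∀ t ∈ S,
    pdtV h y t + (pdy u y t / J y t) • h y t - (J y t)⁻¹ • pdyV ω y t = 0
  /-- (v) `∂ₜ P + γ (∂_y u / J) P = (γ−1)(λ (∂_y u / J)² + μ |∂_y ω / J|²)` -/
  pressure : ∀ y : ℝ, ∀ t ∈ S,
    pdt P y t + gam * (pdy u y t / J y t) * P y t
      = (gam - 1) * (lam * (pdy u y t / J y t) ^ 2 + mu * ‖(J y t)⁻¹ • pdyV ω y t‖ ^ 2)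


/-- The effective viscous flux `G := λ ∂_y u / J − P − |h|²/(8π)`. -/
def Gflux (lam : ℝ) (J u P : ℝ → ℝ → ℝ) (h : ℝ → ℝ → E2) : ℝ → ℝ → ℝ := fun y t =>
  lam * pdy u y t / J y t - P y t - ‖h y t‖ ^ 2 / (8 * π)

/-- The transverse effective viscous flux `F := μ ∂_y ω / J + h/(4π)`. -/
def Fflux (mu : ℝ) (J : ℝ → ℝ → ℝ) (ω h : ℝ → ℝ → E2) : ℝ → ℝ → E2 := fun y t =>
  mu • ((J y t)⁻¹ • pdyV ω y t) + (1 / (4 * π)) • h y t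

/-- The squared magnetic field `H := |h|²`. -/
def Hfield (h : ℝ → ℝ → E2) : ℝ → ℝ → ℝ := fun y t => ‖h y t‖ ^ 2

/-!
By the transverse momentum equation (iii), `∂_y F = ρ₀ ∂ₜ ω`, so `∂_y (∂_y F / ρ₀) = ∂_y ∂ₜ ω`,
which equals `∂ₜ ∂_y ω` by symmetry of second derivatives. On the other hand, differentiating
`F` in time and using (i) for `∂ₜ J` and (iv) for `∂ₜ h` gives
`∂ₜ F = (μ/J) ∂ₜ ∂_y ω − (∂_y u / J) μ ∂_y ω / J + (1/(4π)) (∂_y ω / J − (∂_y u / J) h)`,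
and the mixed derivatives cancel in `∂ₜ F − (μ/J) ∂_y (∂_y F / ρ₀)`.
-/

open Filter Topology

section PartialDerivatives

variable {E : Type*} [NormedAddCommGroup E] [NormedSpace ℝ E]
  {f : ℝ → ℝ → E} {U : Set (ℝ × ℝ)} {y t : ℝ}

theorem HasFDerivAt.hasDerivAt_slice_fst {L : ℝ × ℝ →L[ℝ] E}
    (hf : HasFDerivAt (fun p : ℝ × ℝ => f p.1 p.2) L (y, t)) :
    HasDerivAt (fun z => f z t) (L (1, 0)) y :=
  (HasFDerivAt.comp y (f := fun z => (z, t)) hf (hasFDerivAt_prodMk_left y t)).hasDerivAt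

theorem HasFDerivAt.hasDerivAt_slice_snd {L : ℝ × ℝ →L[ℝ] E}
    (hf : HasFDerivAt (fun p : ℝ × ℝ => f p.1 p.2) L (y, t)) :
    HasDerivAt (fun s => f y s) (L (0, 1)) t :=
  (HasFDerivAt.comp t (f := fun s => (y, s)) hf (hasFDerivAt_prodMk_right y t)).hasDerivAt

variable {n m : WithTop ℕ∞}

theorem ContDiffOn.differentiableAt_slice_fst
    (hf : ContDiffOn ℝ n (fun p : ℝ × ℝ => f p.1 p.2) U) (hn : n ≠ 0) (hU : IsOpen U)
    (hp : (y, t) ∈ U) : DifferentiableAt ℝ (fun z => f z t) y :=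
  (((hf.differentiableOn hn).differentiableAt (hU.mem_nhds hp)).hasFDerivAt
    |>.hasDerivAt_slice_fst).differentiableAt

theorem ContDiffOn.differentiableAt_slice_snd
    (hf : ContDiffOn ℝ n (fun p : ℝ × ℝ => f p.1 p.2) U) (hn : n ≠ 0) (hU : IsOpen U)
    (hp : (y, t) ∈ U) : DifferentiableAt ℝ (fun s => f y s) t :=
  (((hf.differentiableOn hn).differentiableAt (hU.mem_nhds hp)).hasFDerivAt
    |>.hasDerivAt_slice_snd).differentiableAt

theorem ContDiffOn.contDiffOn_deriv_fst
    (hf : ContDiffOn ℝ n (fun p : ℝ × ℝ => f p.1 p.2) U) (hU : IsOpen U) (hmn : m + 1 ≤ n) :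
    ContDiffOn ℝ m (fun p : ℝ × ℝ => deriv (fun z => f z p.2) p.1) U := by
  have hn : n ≠ 0 := ne_bot_of_le_ne_bot (by simp) hmn
  refine ((hf.fderiv_of_isOpen hU hmn).clm_apply
    (contDiffOn_const (c := ((1 : ℝ), (0 : ℝ))))).congr fun p hp => ?_
  exact ((hf.differentiableOn hn).differentiableAt (hU.mem_nhds hp)).hasFDerivAt
    |>.hasDerivAt_slice_fst |>.deriv

theorem ContDiffOn.deriv_deriv_comm
    (hf : ContDiffOn ℝ 2 (fun p : ℝ × ℝ => f p.1 p.2) U) (hU : IsOpen U) (hp : (y, t) ∈ U) :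
    deriv (fun z => deriv (fun s => f z s) t) y = deriv (fun s => deriv (fun z => f z s) y) t := by
  set g : ℝ × ℝ → E := fun p => f p.1 p.2
  have hg : ∀ q ∈ U, HasFDerivAt g (fderiv ℝ g q) q := fun q hq =>
    ((hf.differentiableOn two_ne_zero).differentiableAt (hU.mem_nhds hq)).hasFDerivAt
  have hg' : HasFDerivAt (fderiv ℝ g) (fderiv ℝ (fderiv ℝ g) (y, t)) (y, t) :=
    (((hf.fderiv_of_isOpen hU le_rfl).differentiableOn one_ne_zero).differentiableAt
      (hU.mem_nhds hp)).hasFDerivAt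
  have happly (w : ℝ × ℝ) : HasFDerivAt (fun q => fderiv ℝ g q w)
      ((ContinuousLinearMap.apply ℝ E w).comp (fderiv ℝ (fderiv ℝ g) (y, t))) (y, t) :=
    (ContinuousLinearMap.apply ℝ E w).hasFDerivAt.comp _ hg'
  have hz : ∀ᶠ z in 𝓝 y, (z, t) ∈ U :=
    (continuous_id.prodMk continuous_const).continuousAt.preimage_mem_nhds (hU.mem_nhds hp)
  have hs : ∀ᶠ s in 𝓝 t, (y, s) ∈ U :=
    (continuous_const.prodMk continuous_id).continuousAt.preimage_mem_nhds (hU.mem_nhds hp)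
  have hlhs : HasDerivAt (fun z => deriv (fun s => f z s) t)
      (fderiv ℝ (fderiv ℝ g) (y, t) (1, 0) (0, 1)) y :=
    (happly (0, 1)).hasDerivAt_slice_fst (f := fun z s => fderiv ℝ g (z, s) (0, 1))
      |>.congr_of_eventuallyEq (hz.mono fun z hz => (hg _ hz).hasDerivAt_slice_snd.deriv)
  have hrhs : HasDerivAt (fun s => deriv (fun z => f z s) y)
      (fderiv ℝ (fderiv ℝ g) (y, t) (0, 1) (1, 0)) t :=
    (happly (1, 0)).hasDerivAt_slice_snd (f := fun z s => fderiv ℝ g (z, s) (1, 0))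
      |>.congr_of_eventuallyEq (hs.mono fun s hs => (hg _ hs).hasDerivAt_slice_fst.deriv)
  rw [hlhs.deriv, hrhs.deriv]
  exact second_derivative_symmetric_of_eventually
    (eventually_of_mem (hU.mem_nhds hp) hg) hg' _ _

end PartialDerivatives

namespace IsMHDSolution

variable {lam mu gam : ℝ} {ρ₀ : ℝ → ℝ} {J u P : ℝ → ℝ → ℝ} {ω h : ℝ → ℝ → E2} {S : Set ℝ}
  {y t : ℝ}

theorem pdyV_Fflux (hsol : IsMHDSolution lam mu gam ρ₀ J u P ω h S) (hS : IsOpen S)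
    (ht : t ∈ S) (hJ : J y t ≠ 0) :
    pdyV (Fflux mu J ω h) y t = ρ₀ y • pdtV ω y t := by
  have hU : IsOpen ((Set.univ : Set ℝ) ×ˢ S) := isOpen_univ.prod hS
  have hp : (y, t) ∈ (Set.univ : Set ℝ) ×ˢ S := ⟨trivial, ht⟩
  have hJy : DifferentiableAt ℝ (fun z => J z t) y :=
    hsol.smooth_J.differentiableAt_slice_fst two_ne_zero hU hp
  have hωy : DifferentiableAt ℝ (fun z => pdyV ω z t) y :=
    (hsol.smooth_ω.contDiffOn_deriv_fst hU (m := 1) le_rfl).differentiableAt_slice_fst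
      one_ne_zero hU hp
  have hhy : DifferentiableAt ℝ (fun z => h z t) y :=
    hsol.smooth_h.differentiableAt_slice_fst two_ne_zero hU hp
  have hderiv : pdyV (Fflux mu J ω h) y t
      = mu • pdyV (fun z s => (J z s)⁻¹ • pdyV ω z s) y t + (1 / (4 * π)) • pdyV h y t :=
    ((((hJy.inv hJ).smul hωy).hasDerivAt.const_smul mu).add
      (hhy.hasDerivAt.const_smul (1 / (4 * π)))).deriv
  rw [hderiv, ← hsol.momentumT y t ht]
  abel

theorem pdtV_Fflux (hsol : IsMHDSolution lam mu gam ρ₀ J u P ω h S) (hS : IsOpen S)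
    (ht : t ∈ S) (hJ : J y t ≠ 0) :
    pdtV (Fflux mu J ω h) y t
      = mu • ((J y t)⁻¹ • pdtV (pdyV ω) y t - (pdy u y t / J y t ^ 2) • pdyV ω y t)
        + (1 / (4 * π)) • pdtV h y t := by
  have hU : IsOpen ((Set.univ : Set ℝ) ×ˢ S) := isOpen_univ.prod hS
  have hp : (y, t) ∈ (Set.univ : Set ℝ) ×ˢ S := ⟨trivial, ht⟩
  have hJt : HasDerivAt (fun s => J y s) (pdy u y t) t :=
    hsol.mass y t ht ▸ (hsol.smooth_J.differentiableAt_slice_snd two_ne_zero hU hp).hasDerivAt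
  have hωt : HasDerivAt (fun s => pdyV ω y s) (pdtV (pdyV ω) y t) t :=
    ((hsol.smooth_ω.contDiffOn_deriv_fst hU (m := 1) le_rfl).differentiableAt_slice_snd
      one_ne_zero hU hp).hasDerivAt
  have hht : HasDerivAt (fun s => h y s) (pdtV h y t) t :=
    (hsol.smooth_h.differentiableAt_slice_snd two_ne_zero hU hp).hasDerivAt
  have hF : HasDerivAt (fun s => Fflux mu J ω h y s)
      (mu • ((J y t)⁻¹ • pdtV (pdyV ω) y t + (-pdy u y t / J y t ^ 2) • pdyV ω y t)
        + (1 / (4 * π)) • pdtV h y t) t :=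
    (((hJt.inv hJ).smul hωt).const_smul mu).add (hht.const_smul (1 / (4 * π)))
  rw [pdtV, hF.deriv]
  module

end IsMHDSolution

theorem stmt_4_general (T lam mu gam : ℝ) (ρ₀ : ℝ → ℝ) (hρpos : ∀ y : ℝ, 0 < ρ₀ y)
    (J u P : ℝ → ℝ → ℝ) (ω h : ℝ → ℝ → E2)
    (hJpos : ∀ y : ℝ, ∀ t ∈ Set.Ioo (0 : ℝ) T, 0 < J y t)
    (hsol : IsMHDSolution lam mu gam ρ₀ J u P ω h (Set.Ioo 0 T)) :
    ∀ y : ℝ, ∀ t ∈ Set.Ioo (0 : ℝ) T,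
      pdtV (Fflux mu J ω h) y t
          - (mu / J y t) • pdyV (fun z s => (ρ₀ z)⁻¹ • pdyV (Fflux mu J ω h) z s) y t
        = (-(pdy u y t / J y t)) • Fflux mu J ω h y t
          + (1 / (4 * π)) • ((J y t)⁻¹ • pdyV ω y t) := by
  intro y t ht
  have hflux (z : ℝ) : (ρ₀ z)⁻¹ • pdyV (Fflux mu J ω h) z t = pdtV ω z t := by
    rw [hsol.pdyV_Fflux isOpen_Ioo ht (hJpos z t ht).ne', inv_smul_smul₀ (hρpos z).ne']
  have hmixed : pdyV (fun z s => (ρ₀ z)⁻¹ • pdyV (Fflux mu J ω h) z s) y t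
      = pdtV (pdyV ω) y t :=
    (congrArg (deriv · y) (funext hflux)).trans
      (hsol.smooth_ω.deriv_deriv_comm (isOpen_univ.prod isOpen_Ioo) ⟨trivial, ht⟩)
  have hmagnetic : pdtV h y t = (J y t)⁻¹ • pdyV ω y t - (pdy u y t / J y t) • h y t :=
    eq_sub_of_add_eq (sub_eq_zero.mp (hsol.magnetic y t ht))
  rw [hsol.pdtV_Fflux isOpen_Ioo ht (hJpos y t ht).ne', hmixed, hmagnetic, Fflux]
  module

/-- for a classical solution of the planar non-resistive MHD system in
Lagrangian coordinates on `ℝ × (0,T)` with `J > 0` and `ρ₀ > 0`, `ρ₀` differentiable,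
the transverse effective viscous flux `F := μ ∂_y ω / J + h/(4π)` satisfies pointwise
`∂ₜ F − (μ/J) ∂_y(∂_y F / ρ₀) = −(∂_y u / J) F + (1/(4π)) ∂_y ω / J`. -/
theorem stmt_4 (T lam mu gam : ℝ) (hT : 0 < T) (hlam : 0 < lam) (hmu : 0 < mu)
    (hgam : 1 < gam) (ρ₀ : ℝ → ℝ) (hρpos : ∀ y : ℝ, 0 < ρ₀ y)
    (hρdiff : Differentiable ℝ ρ₀)
    (J u P : ℝ → ℝ → ℝ) (ω h : ℝ → ℝ → E2)
    (hJpos : ∀ y : ℝ, ∀ t ∈ Set.Ioo (0 : ℝ) T, 0 < J y t)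
    (hsol : IsMHDSolution lam mu gam ρ₀ J u P ω h (Set.Ioo 0 T)) :
    ∀ y : ℝ, ∀ t ∈ Set.Ioo (0 : ℝ) T,
      pdtV (Fflux mu J ω h) y t
          - (mu / J y t) • pdyV (fun z s => (ρ₀ z)⁻¹ • pdyV (Fflux mu J ω h) z s) y t
        = (-(pdy u y t / J y t)) • Fflux mu J ω h y t
          + (1 / (4 * π)) • ((J y t)⁻¹ • pdyV ω y t) :=
  stmt_4_general T lam mu gam ρ₀ hρpos J u P ω h hJpos hsol
end
end

section
/- Let J, u, P : ℝ × (0,T) → ℝ and ω, h : ℝ × (0,T) → ℝ² be differentiable in the variables indicated, with J > 0 everywhere, and suppose the pressure equation ∂_t P + γ (∂_y u / J) P = (γ−1)( λ (∂_y u / J)² + μ |∂_y ω / J|² ) holds pointwise. Then, with G := λ ∂_y u / J − P − |h|²/(8π), F := μ ∂_y ω / J + h/(4π), and H := |h|², one has pointwise: ∂_t P + (1/λ)( P + ((2−γ)/2) G + ((2−γ)/(16π)) H )² = (γ²/(4λ))( G + H/(8π) )² + ((γ−1)/μ) |F − h/(4π)|². -/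
open Real MeasureTheory
open scoped InnerProductSpace

noncomputable section

/-- if `J > 0` and the pressure equation
`∂ₜ P + γ (∂_y u / J) P = (γ−1)(λ (∂_y u / J)² + μ |∂_y ω / J|²)` holds pointwise on
`ℝ × (0,T)`, then, with `G := λ ∂_y u / J − P − |h|²/(8π)`, `F := μ ∂_y ω / J + h/(4π)`
and `H := |h|²`, one has pointwise
`∂ₜ P + (1/λ)(P + ((2−γ)/2) G + ((2−γ)/(16π)) H)²
   = (γ²/(4λ))(G + H/(8π))² + ((γ−1)/μ)|F − h/(4π)|²`. -/
theorem stmt_8 (T lam mu gam : ℝ) (hT : 0 < T) (hlam : 0 < lam) (hmu : 0 < mu)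
    (hgam : 1 < gam)
    (J u P : ℝ → ℝ → ℝ) (ω h : ℝ → ℝ → E2)
    (hJpos : ∀ y : ℝ, ∀ t ∈ Set.Ioo (0 : ℝ) T, 0 < J y t)
    (huy : ∀ y : ℝ, ∀ t ∈ Set.Ioo (0 : ℝ) T, DifferentiableAt ℝ (fun z => u z t) y)
    (hωy : ∀ y : ℝ, ∀ t ∈ Set.Ioo (0 : ℝ) T, DifferentiableAt ℝ (fun z => ω z t) y)
    (hPt : ∀ y : ℝ, ∀ t ∈ Set.Ioo (0 : ℝ) T, DifferentiableAt ℝ (fun s => P y s) t)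
    (heq : ∀ y : ℝ, ∀ t ∈ Set.Ioo (0 : ℝ) T,
      pdt P y t + gam * (pdy u y t / J y t) * P y t
        = (gam - 1) * (lam * (pdy u y t / J y t) ^ 2 + mu * ‖(J y t)⁻¹ • pdyV ω y t‖ ^ 2)) :
    ∀ y : ℝ, ∀ t ∈ Set.Ioo (0 : ℝ) T,
      pdt P y t
          + (1 / lam) * (P y t + ((2 - gam) / 2) * Gflux lam J u P h y t
              + ((2 - gam) / (16 * π)) * Hfield h y t) ^ 2
        = (gam ^ 2 / (4 * lam)) * (Gflux lam J u P h y t + Hfield h y t / (8 * π)) ^ 2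
          + ((gam - 1) / mu) * ‖Fflux mu J ω h y t - (1 / (4 * π)) • h y t‖ ^ 2 := by
  intro y t ht
  have hkey := heq y t ht
  have hF : Fflux mu J ω h y t - (1 / (4 * π)) • h y t = mu • ((J y t)⁻¹ • pdyV ω y t) := by
    simp [Fflux]
  have hN : ‖Fflux mu J ω h y t - (1 / (4 * π)) • h y t‖ ^ 2
      = mu ^ 2 * ‖(J y t)⁻¹ • pdyV ω y t‖ ^ 2 := by
    rw [hF, norm_smul, mul_pow, Real.norm_eq_abs, sq_abs]
  rw [hN]
  have hpdt : pdt P y t = (gam - 1) * (lam * (pdy u y t / J y t) ^ 2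
      + mu * ‖(J y t)⁻¹ • pdyV ω y t‖ ^ 2) - gam * (pdy u y t / J y t) * P y t := by
    linarith
  rw [hpdt]
  simp only [Gflux, Hfield]
  have hpi : (π : ℝ) ≠ 0 := Real.pi_ne_zero
  have hJ : J y t ≠ 0 := (hJpos y t ht).ne'
  field_simp
  ring
end
end

section
/- Let J, u, P : ℝ × (0,T) → ℝ and ω, h : ℝ × (0,T) → ℝ² be differentiable in the variables indicated, with J > 0 everywhere, and suppose the magnetic field equation ∂_t h + (∂_y u / J) h − ∂_y ω / J = 0 holds pointwise. Then, with G := λ ∂_y u / J − P − |h|²/(8π), F := μ ∂_y ω / J + h/(4π), and H := |h|², one has the pointwise sum-of-squares identity: ∂_t H + (1/λ)( H/(2√π) + 2√π G )² + (1/μ)| h/√(2π) − √(2π) F |² + (2/λ) H P = (4π/λ) G² + (2π/μ) |F|². -/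
open Real MeasureTheory
open scoped InnerProductSpace

noncomputable section

/-- if `J > 0` and the magnetic field equation
`∂ₜ h + (∂_y u / J) h − ∂_y ω / J = 0` holds pointwise on `ℝ × (0,T)`, then, with
`G := λ ∂_y u / J − P − |h|²/(8π)`, `F := μ ∂_y ω / J + h/(4π)` and `H := |h|²`,
one has the pointwise sum-of-squares identity
`∂ₜ H + (1/λ)(H/(2√π) + 2√π G)² + (1/μ)|h/√(2π) − √(2π) F|² + (2/λ) H P
   = (4π/λ) G² + (2π/μ) |F|²`. -/
theorem stmt_9 (T lam mu : ℝ) (hT : 0 < T) (hlam : 0 < lam) (hmu : 0 < mu)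
    (J u P : ℝ → ℝ → ℝ) (ω h : ℝ → ℝ → E2)
    (hJpos : ∀ y : ℝ, ∀ t ∈ Set.Ioo (0 : ℝ) T, 0 < J y t)
    (huy : ∀ y : ℝ, ∀ t ∈ Set.Ioo (0 : ℝ) T, DifferentiableAt ℝ (fun z => u z t) y)
    (hωy : ∀ y : ℝ, ∀ t ∈ Set.Ioo (0 : ℝ) T, DifferentiableAt ℝ (fun z => ω z t) y)
    (hht : ∀ y : ℝ, ∀ t ∈ Set.Ioo (0 : ℝ) T, DifferentiableAt ℝ (fun s => h y s) t)
    (heq : ∀ y : ℝ, ∀ t ∈ Set.Ioo (0 : ℝ) T,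
      pdtV h y t + (pdy u y t / J y t) • h y t - (J y t)⁻¹ • pdyV ω y t = 0) :
    ∀ y : ℝ, ∀ t ∈ Set.Ioo (0 : ℝ) T,
      pdt (Hfield h) y t
          + (1 / lam) * (Hfield h y t / (2 * Real.sqrt π)
              + 2 * Real.sqrt π * Gflux lam J u P h y t) ^ 2
          + (1 / mu) * ‖(Real.sqrt (2 * π))⁻¹ • h y t
              - Real.sqrt (2 * π) • Fflux mu J ω h y t‖ ^ 2
          + (2 / lam) * Hfield h y t * P y t
        = (4 * π / lam) * (Gflux lam J u P h y t) ^ 2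
          + (2 * π / mu) * ‖Fflux mu J ω h y t‖ ^ 2 := by
  intro y t ht
  have hπ : (0 : ℝ) < π := Real.pi_pos
  have hs : Real.sqrt π ^ 2 = π := Real.sq_sqrt hπ.le
  have hsne : Real.sqrt π ≠ 0 := by positivity
  have hr : Real.sqrt (2 * π) ^ 2 = 2 * π := Real.sq_sqrt (by positivity)
  have hrne : Real.sqrt (2 * π) ≠ 0 := by positivity
  have hJ : J y t ≠ 0 := (hJpos y t ht).ne'
  -- time derivative of H
  have hderiv : HasDerivAt (fun s => h y s) (pdtV h y t) t := (hht y t ht).hasDerivAt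
  have hdt : pdt (Hfield h) y t = 2 * ⟪h y t, pdtV h y t⟫_ℝ := by
    have h2 := hderiv.inner ℝ hderiv
    have h3 : pdt (Hfield h) y t = deriv (fun s => ⟪h y s, h y s⟫_ℝ) t := by
      unfold pdt Hfield
      congr 1
      ext s
      exact (real_inner_self_eq_norm_sq _).symm
    rw [h3, h2.deriv, real_inner_comm]
    ring
  -- magnetic field equation rearranged
  have hmag : pdtV h y t = (J y t)⁻¹ • pdyV ω y t - (pdy u y t / J y t) • h y t := by
    have h0 := heq y t ht
    have h1 : pdtV h y t + (pdy u y t / J y t) • h y t = (J y t)⁻¹ • pdyV ω y t :=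
      sub_eq_zero.mp h0
    rw [eq_sub_iff_add_eq]
    exact h1
  -- abbreviations
  set a : ℝ := pdy u y t / J y t with ha
  set w : E2 := (J y t)⁻¹ • pdyV ω y t with hw
  set hv : E2 := h y t with hhv
  -- scalar square expansion
  have sqA : ∀ x g : ℝ, (x / (2 * Real.sqrt π) + 2 * Real.sqrt π * g) ^ 2
      = x ^ 2 / (4 * π) + 2 * x * g + 4 * π * g ^ 2 := by
    intro x g
    field_simp
    linear_combination (64 * g ^ 2 * π * Real.sqrt π ^ 2 - 4 * x ^ 2) * hs
  -- vector square expansion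
  have sqB : ∀ v F : E2, ‖(Real.sqrt (2 * π))⁻¹ • v - Real.sqrt (2 * π) • F‖ ^ 2
      = (2 * π)⁻¹ * ‖v‖ ^ 2 - 2 * ⟪v, F⟫_ℝ + 2 * π * ‖F‖ ^ 2 := by
    intro v F
    rw [norm_sub_sq_real, real_inner_smul_left, real_inner_smul_right,
      norm_smul, norm_smul, mul_pow, mul_pow]
    rw [Real.norm_eq_abs, Real.norm_eq_abs, sq_abs, sq_abs, hr,
      inv_pow, hr, inv_mul_cancel_left₀ hrne]
  -- inner products
  have hhF : ⟪hv, Fflux mu J ω h y t⟫_ℝ = mu * ⟪hv, w⟫_ℝ + 1 / (4 * π) * ‖hv‖ ^ 2 := by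
    simp only [Fflux, inner_add_right, real_inner_smul_right, ← hw, ← hhv,
      real_inner_self_eq_norm_sq]
  have hGval : Gflux lam J u P h y t = lam * a - P y t - ‖hv‖ ^ 2 / (8 * π) := by
    simp only [Gflux, ← hhv]
    rw [ha]
    ring
  have hdt2 : pdt (Hfield h) y t = 2 * ⟪hv, w⟫_ℝ - 2 * a * ‖hv‖ ^ 2 := by
    rw [hdt, hmag]
    simp only [inner_sub_right, real_inner_smul_right, real_inner_self_eq_norm_sq]
    ring
  have hHval : Hfield h y t = ‖hv‖ ^ 2 := rfl
  rw [hHval, hdt2, hGval, sqA, sqB, hhF]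
  field_simp
  ring
end
end

section
/- Let J, u, P : ℝ × [0,T] → ℝ and ω, h : ℝ × [0,T] → ℝ² be functions with J > 0 everywhere, such that for each fixed y the map t ↦ P(y,t) is continuously differentiable, the functions G(y,·), H(y,·), F(y,·), h(y,·) are continuous, and the pressure equation ∂_t P + γ (∂_y u / J) P = (γ−1)( λ (∂_y u / J)² + μ |∂_y ω / J|² ) holds pointwise. Then, with G := λ ∂_y u / J − P − |h|²/(8π), F := μ ∂_y ω / J + h/(4π), and H := |h|², one has for all (y,t): P(y,t) ≤ P(y,0) + ∫₀ᵗ [ (γ²/(4λ))( G(y,s) + H(y,s)/(8π) )² + ((γ−1)/μ) |F(y,s) − h(y,s)/(4π)|² ] ds. -/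
open Real MeasureTheory
open scoped InnerProductSpace

noncomputable section

theorem le_add_integral_of_hasDerivWithinAt_le {f f' g : ℝ → ℝ} {a b t : ℝ}
    (hf : ∀ x ∈ Set.Icc a b, HasDerivWithinAt f (f' x) (Set.Icc a b) x)
    (hg : ContinuousOn g (Set.Icc a b)) (hle : ∀ x ∈ Set.Icc a b, f' x ≤ g x)
    (ht : t ∈ Set.Icc a b) :
    f t ≤ f a + ∫ x in a..t, g x := by
  have hsub : Set.Icc a t ⊆ Set.Icc a b := Set.Icc_subset_Icc le_rfl ht.2
  have hIoo : ∀ x ∈ Set.Ioo a t, Set.Icc a b ∈ nhds x := fun x hx =>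
    Icc_mem_nhds hx.1 (hx.2.trans_le ht.2)
  have key := intervalIntegral.sub_le_integral_of_hasDeriv_right_of_le ht.1
    (fun x hx => (hf x (hsub hx)).continuousWithinAt.mono hsub)
    (fun x hx => ((hf x (mem_of_mem_nhds (hIoo x hx))).hasDerivAt (hIoo x hx)).hasDerivWithinAt)
    ((hg.mono hsub).integrableOn_Icc)
    (fun x hx => hle x (hsub (Set.Ioo_subset_Icc_self hx)))
  linarith

/-- Completing the square in `v`: `γ²(λv − p)² − 4λ((γ−1)λv² − γvp) = ((γ−2)λv − γp)²`. -/
theorem rate_le_of_pressure_eq {E : Type*} [NormedAddCommGroup E] [NormedSpace ℝ E]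
    {lam mu gam p p' v : ℝ} {w : E} (hlam : 0 < lam) (hmu : mu ≠ 0)
    (heq : p' + gam * v * p = (gam - 1) * (lam * v ^ 2 + mu * ‖w‖ ^ 2)) :
    p' ≤ gam ^ 2 / (4 * lam) * (lam * v - p) ^ 2 + (gam - 1) / mu * ‖mu • w‖ ^ 2 := by
  have hnorm : (gam - 1) / mu * ‖mu • w‖ ^ 2 = (gam - 1) * (mu * ‖w‖ ^ 2) := by
    rw [norm_smul, mul_pow, Real.norm_eq_abs, sq_abs]
    field_simp
  have hsquare : -(gam * v * p) + (gam - 1) * (lam * v ^ 2)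
      ≤ gam ^ 2 / (4 * lam) * (lam * v - p) ^ 2 := by
    rw [div_mul_eq_mul_div, le_div_iff₀ (by positivity)]
    nlinarith [sq_nonneg ((gam - 2) * lam * v - gam * p)]
  linarith

theorem Gflux_add_Hfield_div (lam : ℝ) (J u P : ℝ → ℝ → ℝ) (h : ℝ → ℝ → E2) (y t : ℝ) :
    Gflux lam J u P h y t + Hfield h y t / (8 * π) = lam * (pdy u y t / J y t) - P y t := by
  simp only [Gflux, Hfield]
  ring

theorem Fflux_sub_smul (mu : ℝ) (J : ℝ → ℝ → ℝ) (ω h : ℝ → ℝ → E2) (y t : ℝ) :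
    Fflux mu J ω h y t - (1 / (4 * π)) • h y t = mu • ((J y t)⁻¹ • pdyV ω y t) :=
  add_sub_cancel_right _ _

theorem stmt_11_general (T lam mu gam : ℝ) (hlam : 0 < lam) (hmu : 0 < mu)
    (J u P : ℝ → ℝ → ℝ) (ω h : ℝ → ℝ → E2) (P' : ℝ → ℝ → ℝ)
    (hPt : ∀ y : ℝ, ∀ t ∈ Set.Icc (0 : ℝ) T,
      HasDerivWithinAt (fun s => P y s) (P' y t) (Set.Icc 0 T) t)
    (hGc : ∀ y : ℝ, ContinuousOn (fun s => Gflux lam J u P h y s) (Set.Icc 0 T))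
    (hHc : ∀ y : ℝ, ContinuousOn (fun s => Hfield h y s) (Set.Icc 0 T))
    (hFc : ∀ y : ℝ, ContinuousOn (fun s => Fflux mu J ω h y s) (Set.Icc 0 T))
    (hhc : ∀ y : ℝ, ContinuousOn (fun s => h y s) (Set.Icc 0 T))
    (heq : ∀ y : ℝ, ∀ t ∈ Set.Icc (0 : ℝ) T,
      P' y t + gam * (pdy u y t / J y t) * P y t
        = (gam - 1) * (lam * (pdy u y t / J y t) ^ 2 + mu * ‖(J y t)⁻¹ • pdyV ω y t‖ ^ 2)) :
    ∀ y : ℝ, ∀ t ∈ Set.Icc (0 : ℝ) T,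
      P y t
        ≤ P y 0 + ∫ s in (0:ℝ)..t,
            ((gam ^ 2 / (4 * lam))
                * (Gflux lam J u P h y s + Hfield h y s / (8 * π)) ^ 2
              + ((gam - 1) / mu)
                * ‖Fflux mu J ω h y s - (1 / (4 * π)) • h y s‖ ^ 2) := by
  intro y t ht
  set φ : ℝ → ℝ := fun s =>
    (gam ^ 2 / (4 * lam)) * (Gflux lam J u P h y s + Hfield h y s / (8 * π)) ^ 2
      + ((gam - 1) / mu) * ‖Fflux mu J ω h y s - (1 / (4 * π)) • h y s‖ ^ 2
  have hφc : ContinuousOn φ (Set.Icc 0 T) :=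
    (continuousOn_const.mul (((hGc y).add ((hHc y).div_const (8 * π))).pow 2)).add
      (continuousOn_const.mul (((hFc y).sub ((hhc y).const_smul (1 / (4 * π) : ℝ))).norm.pow 2))
  have hrate : ∀ s ∈ Set.Icc (0 : ℝ) T, P' y s ≤ φ s := fun s hs => by
    simp only [φ, Gflux_add_Hfield_div, Fflux_sub_smul]
    exact rate_le_of_pressure_eq hlam hmu.ne' (heq y s hs)
  exact le_add_integral_of_hasDerivWithinAt_le (hPt y) hφc hrate ht

/-- if `J > 0`, for each `y` the map `t ↦ P(y,t)` is continuously
differentiable on `[0,T]` (with derivative `P'`), the maps `G(y,·)`, `H(y,·)`, `F(y,·)`,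
`h(y,·)` are continuous, and the pressure equation
`∂ₜ P + γ (∂_y u / J) P = (γ−1)(λ (∂_y u / J)² + μ |∂_y ω / J|²)` holds pointwise, then
for all `(y,t)`:
`P(y,t) ≤ P(y,0) + ∫₀ᵗ [ (γ²/(4λ))(G + H/(8π))² + ((γ−1)/μ)|F − h/(4π)|² ](y,s) ds`. -/
theorem stmt_11 (T lam mu gam : ℝ) (hT : 0 < T) (hlam : 0 < lam) (hmu : 0 < mu)
    (hgam : 1 < gam)
    (J u P : ℝ → ℝ → ℝ) (ω h : ℝ → ℝ → E2) (P' : ℝ → ℝ → ℝ)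
    (hJpos : ∀ y : ℝ, ∀ t ∈ Set.Icc (0 : ℝ) T, 0 < J y t)
    (hPt : ∀ y : ℝ, ∀ t ∈ Set.Icc (0 : ℝ) T,
      HasDerivWithinAt (fun s => P y s) (P' y t) (Set.Icc 0 T) t)
    (hP'c : ∀ y : ℝ, ContinuousOn (fun s => P' y s) (Set.Icc 0 T))
    (hGc : ∀ y : ℝ, ContinuousOn (fun s => Gflux lam J u P h y s) (Set.Icc 0 T))
    (hHc : ∀ y : ℝ, ContinuousOn (fun s => Hfield h y s) (Set.Icc 0 T))
    (hFc : ∀ y : ℝ, ContinuousOn (fun s => Fflux mu J ω h y s) (Set.Icc 0 T))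
    (hhc : ∀ y : ℝ, ContinuousOn (fun s => h y s) (Set.Icc 0 T))
    (heq : ∀ y : ℝ, ∀ t ∈ Set.Icc (0 : ℝ) T,
      P' y t + gam * (pdy u y t / J y t) * P y t
        = (gam - 1) * (lam * (pdy u y t / J y t) ^ 2 + mu * ‖(J y t)⁻¹ • pdyV ω y t‖ ^ 2)) :
    ∀ y : ℝ, ∀ t ∈ Set.Icc (0 : ℝ) T,
      P y t
        ≤ P y 0 + ∫ s in (0:ℝ)..t,
            ((gam ^ 2 / (4 * lam))
                * (Gflux lam J u P h y s + Hfield h y s / (8 * π)) ^ 2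
              + ((gam - 1) / mu)
                * ‖Fflux mu J ω h y s - (1 / (4 * π)) • h y s‖ ^ 2) :=
  stmt_11_general T lam mu gam hlam hmu J u P ω h P' hPt hGc hHc hFc hhc heq
end
end

section
/- Under the hypotheses of the integral representation λ ln J(y,t) = ∫_{−∞}^{y} ρ₀(y')( u(y',t) − u(y',0) ) dy' + ∫₀ᵗ ( P(y,τ) + |h(y,τ)|²/(8π) ) dτ, assume in addition that ρ₀ ≥ 0 is integrable on ℝ with ∫_ℝ ρ₀ dy = m, that P ≥ 0 everywhere, and that there exists E₀ ≥ 0 with ∫_ℝ ρ₀(y) u(y,t)² dy ≤ 2E₀ for all t ∈ [0,T] (in particular at t = 0, ∫_ℝ ρ₀ u(·,0)² dy ≤ 2E₀). Then for all (y,t) ∈ ℝ × [0,T]: J(y,t) ≥ exp( −(2√2/λ) √(m E₀) ). -/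
open Real MeasureTheory
open scoped InnerProductSpace

noncomputable section

/-! The time integral in the representation of `λ ln J` is nonnegative, so only the space integral
can push `J` down. Young's inequality `ρ |a - b| ≤ ε ρ / 2 + ρ (a² + b²) / ε`, integrated and
optimised over `ε`, bounds that term by `√(2 m · 4E₀) = 2√2 √(m E₀)`; this is the Cauchy–Schwarz
bound of the paper, obtained without any measurability of `u`. -/

lemma le_two_sqrt_mul_of_forall_le_mul_add_div {a b C : ℝ} (ha : 0 ≤ a) (hb : 0 ≤ b)
    (h : ∀ ε > 0, C ≤ ε * a + b / ε) : C ≤ 2 * √(a * b) := by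
  obtain ⟨s, hs, rfl⟩ : ∃ s, 0 ≤ s ∧ s ^ 2 = a := ⟨√a, sqrt_nonneg a, sq_sqrt ha⟩
  obtain ⟨t, ht, rfl⟩ : ∃ t, 0 ≤ t ∧ t ^ 2 = b := ⟨√b, sqrt_nonneg b, sq_sqrt hb⟩
  rw [← mul_pow, sqrt_sq (by positivity)]
  refine le_of_forall_pos_le_add fun δ hδ => ?_
  -- `ε = (t + η) / (s + η)` approximates the optimal ratio `t / s` without dividing by zero
  set η := δ / (s + t + 1)
  have hη : 0 < η := by positivity
  have hηδ : η * (s + t) ≤ δ := by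
    rw [div_mul_eq_mul_div, div_le_iff₀ (by positivity)]; nlinarith
  have hsq (x : ℝ) (hx : 0 ≤ x) : x ^ 2 / (x + η) ≤ x := by
    rw [div_le_iff₀ (by positivity)]; nlinarith
  calc C ≤ (t + η) / (s + η) * s ^ 2 + t ^ 2 / ((t + η) / (s + η)) := h _ (by positivity)
    _ = (t + η) * (s ^ 2 / (s + η)) + (s + η) * (t ^ 2 / (t + η)) := by
      field_simp
    _ ≤ (t + η) * s + (s + η) * t := by
      gcongr
      · exact hsq s hs
      · exact hsq t ht
    _ ≤ 2 * (s * t) + δ := by nlinarith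

lemma abs_sub_le_half_add_sq_add_sq_div {a b ε : ℝ} (hε : 0 < ε) :
    |a - b| ≤ ε / 2 + (a ^ 2 + b ^ 2) / ε := by
  rw [← sub_nonneg]
  have key : ε / 2 + (a ^ 2 + b ^ 2) / ε - |a - b|
      = ((|a - b| - ε) ^ 2 + (a + b) ^ 2) / (2 * ε) := by
    field_simp
    rw [sub_sq, sq_abs]
    ring
  rw [key]
  positivity

lemma abs_setIntegral_mul_sub_le {α : Type*} [MeasurableSpace α] {μ : Measure α}
    {ρ a b : α → ℝ} (s : Set α) (hρ : ∀ x, 0 ≤ ρ x) (hρi : Integrable ρ μ)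
    (hai : Integrable (fun x => ρ x * a x ^ 2) μ) (hbi : Integrable (fun x => ρ x * b x ^ 2) μ) :
    |∫ x in s, ρ x * (a x - b x) ∂μ|
      ≤ √(2 * (∫ x, ρ x ∂μ) * ((∫ x, ρ x * a x ^ 2 ∂μ) + ∫ x, ρ x * b x ^ 2 ∂μ)) := by
  have hM : 0 ≤ ∫ x, ρ x ∂μ := integral_nonneg hρ
  have hab : Integrable (fun x => ρ x * a x ^ 2 + ρ x * b x ^ 2) μ := hai.add hbi
  have hAB : 0 ≤ (∫ x, ρ x * a x ^ 2 ∂μ) + ∫ x, ρ x * b x ^ 2 ∂μ := by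
    rw [← integral_add hai hbi]
    exact integral_nonneg fun x => by have := hρ x; positivity
  have hsqrt : √(2 * (∫ x, ρ x ∂μ) * ((∫ x, ρ x * a x ^ 2 ∂μ) + ∫ x, ρ x * b x ^ 2 ∂μ))
      = 2 * √((∫ x, ρ x ∂μ) / 2 * ((∫ x, ρ x * a x ^ 2 ∂μ) + ∫ x, ρ x * b x ^ 2 ∂μ)) := by
    rw [← sqrt_sq zero_le_two, ← sqrt_mul (by norm_num)]
    ring_nf
  rw [hsqrt]
  refine le_two_sqrt_mul_of_forall_le_mul_add_div (by positivity) hAB fun ε hε => ?_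
  set g : α → ℝ := fun x => ε / 2 * ρ x + (ρ x * a x ^ 2 + ρ x * b x ^ 2) / ε
  have hgi : Integrable g μ := (hρi.const_mul _).add (hab.div_const _)
  have hfg (x : α) : ‖ρ x * (a x - b x)‖ ≤ g x := by
    rw [Real.norm_eq_abs, abs_mul, abs_of_nonneg (hρ x)]
    calc ρ x * |a x - b x| ≤ ρ x * (ε / 2 + (a x ^ 2 + b x ^ 2) / ε) :=
          mul_le_mul_of_nonneg_left (abs_sub_le_half_add_sq_add_sq_div hε) (hρ x)
      _ = g x := by simp only [g]; ring
  calc |∫ x in s, ρ x * (a x - b x) ∂μ|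
      ≤ ∫ x in s, g x ∂μ := norm_integral_le_of_norm_le hgi.integrableOn (.of_forall hfg)
    _ ≤ ∫ x, g x ∂μ :=
      setIntegral_le_integral hgi (.of_forall fun x => (norm_nonneg _).trans (hfg x))
    _ = ε * ((∫ x, ρ x ∂μ) / 2) + ((∫ x, ρ x * a x ^ 2 ∂μ) + ∫ x, ρ x * b x ^ 2 ∂μ) / ε := by
      simp only [g]
      rw [integral_add (hρi.const_mul _) (hab.div_const _), integral_const_mul,
        integral_div, integral_add hai hbi]
      ring

theorem stmt_15_general (T lam m E₀ : ℝ) (hT : 0 ≤ T) (hlam : 0 < lam)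
    (ρ₀ : ℝ → ℝ) (J u P : ℝ → ℝ → ℝ) (h : ℝ → ℝ → E2)
    (hJpos : ∀ y : ℝ, ∀ t ∈ Set.Icc (0 : ℝ) T, 0 < J y t)
    (hρnn : ∀ y : ℝ, 0 ≤ ρ₀ y)
    (hρint : MeasureTheory.Integrable ρ₀)
    (hm : ∫ y : ℝ, ρ₀ y = m)
    (hPnn : ∀ y : ℝ, ∀ t ∈ Set.Icc (0 : ℝ) T, 0 ≤ P y t)
    (hu2int : ∀ t ∈ Set.Icc (0 : ℝ) T,
      MeasureTheory.Integrable (fun y => ρ₀ y * (u y t) ^ 2))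
    (hu2 : ∀ t ∈ Set.Icc (0 : ℝ) T, ∫ y : ℝ, ρ₀ y * (u y t) ^ 2 ≤ 2 * E₀)
    (hrep : ∀ y : ℝ, ∀ t ∈ Set.Icc (0 : ℝ) T,
      lam * Real.log (J y t)
        = (∫ y' in Set.Iic y, ρ₀ y' * (u y' t - u y' 0))
          + ∫ τ in (0:ℝ)..t, (P y τ + ‖h y τ‖ ^ 2 / (8 * π))) :
    ∀ y : ℝ, ∀ t ∈ Set.Icc (0 : ℝ) T,
      Real.exp (-(2 * Real.sqrt 2 / lam) * Real.sqrt (m * E₀)) ≤ J y t := by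
  intro y t ht
  have ht0 : (0 : ℝ) ∈ Set.Icc (0 : ℝ) T := ⟨le_rfl, hT⟩
  have hm0 : 0 ≤ m := hm ▸ integral_nonneg hρnn
  have hspace : |∫ y' in Set.Iic y, ρ₀ y' * (u y' t - u y' 0)| ≤ 2 * √2 * √(m * E₀) :=
    calc _ ≤ √(2 * m * ((∫ y, ρ₀ y * u y t ^ 2) + ∫ y, ρ₀ y * u y 0 ^ 2)) :=
          hm ▸ abs_setIntegral_mul_sub_le _ hρnn hρint (hu2int t ht) (hu2int 0 ht0)
      _ ≤ √(2 ^ 2 * 2 * (m * E₀)) :=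
          sqrt_le_sqrt (by nlinarith [hu2 t ht, hu2 0 ht0])
      _ = 2 * √2 * √(m * E₀) := by
          rw [sqrt_mul (by positivity), sqrt_mul (by positivity), sqrt_sq zero_le_two]
  have htime : 0 ≤ ∫ τ in (0:ℝ)..t, (P y τ + ‖h y τ‖ ^ 2 / (8 * π)) :=
    intervalIntegral.integral_nonneg ht.1 fun τ hτ => by
      have := hPnn y τ ⟨hτ.1, hτ.2.trans ht.2⟩
      positivity
  have hlog : -(2 * √2 / lam) * √(m * E₀) ≤ Real.log (J y t) := by
    rw [neg_mul, div_mul_eq_mul_div, neg_le, le_div_iff₀ hlam]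
    linarith [hrep y t ht, neg_abs_le (∫ y' in Set.Iic y, ρ₀ y' * (u y' t - u y' 0))]
  exact (exp_le_exp.2 hlog).trans_eq (exp_log (hJpos y t ht))

/-- Lemma 3.3 of the paper: the uniform positive lower bound of the
Jacobian. Under the integral representation
`λ ln J(y,t) = ∫_{−∞}^y ρ₀ (u(·,t) − u(·,0)) + ∫₀ᵗ (P(y,τ) + |h(y,τ)|²/(8π)) dτ`,
if `ρ₀ ≥ 0` is integrable with total mass `m`, `P ≥ 0`, and
`∫ ρ₀ u(·,t)² ≤ 2E₀` for all `t`, then `J(y,t) ≥ exp(−(2√2/λ)√(m E₀))`. -/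
theorem stmt_15 (T lam m E₀ : ℝ) (hT : 0 ≤ T) (hlam : 0 < lam) (hE : 0 ≤ E₀)
    (ρ₀ : ℝ → ℝ) (J u P : ℝ → ℝ → ℝ) (h : ℝ → ℝ → E2)
    (hJpos : ∀ y : ℝ, ∀ t ∈ Set.Icc (0 : ℝ) T, 0 < J y t)
    (hρnn : ∀ y : ℝ, 0 ≤ ρ₀ y)
    (hρint : MeasureTheory.Integrable ρ₀)
    (hm : ∫ y : ℝ, ρ₀ y = m)
    (hPnn : ∀ y : ℝ, ∀ t ∈ Set.Icc (0 : ℝ) T, 0 ≤ P y t)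
    (hu2int : ∀ t ∈ Set.Icc (0 : ℝ) T,
      MeasureTheory.Integrable (fun y => ρ₀ y * (u y t) ^ 2))
    (hu2 : ∀ t ∈ Set.Icc (0 : ℝ) T, ∫ y : ℝ, ρ₀ y * (u y t) ^ 2 ≤ 2 * E₀)
    (hint1 : ∀ t ∈ Set.Icc (0 : ℝ) T, ∀ y : ℝ,
      MeasureTheory.IntegrableOn (fun y' => ρ₀ y' * (u y' t - u y' 0)) (Set.Iic y))
    (hrep : ∀ y : ℝ, ∀ t ∈ Set.Icc (0 : ℝ) T,
      lam * Real.log (J y t)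
        = (∫ y' in Set.Iic y, ρ₀ y' * (u y' t - u y' 0))
          + ∫ τ in (0:ℝ)..t, (P y τ + ‖h y τ‖ ^ 2 / (8 * π))) :
    ∀ y : ℝ, ∀ t ∈ Set.Icc (0 : ℝ) T,
      Real.exp (-(2 * Real.sqrt 2 / lam) * Real.sqrt (m * E₀)) ≤ J y t :=
  stmt_15_general T lam m E₀ hT hlam ρ₀ J u P h hJpos hρnn hρint hm hPnn hu2int hu2 hrep
end
end

section
/- Let (J, u, ω, h, P) be a classical solution of the planar non-resistive MHD system in Lagrangian coordinates on ℝ × [0,T] with J > 0 and ρ₀ ≥ 0. Assume there is E₀ ≥ 0 with ∫_ℝ J(y,t)|h(y,t)|² dy ≤ 8π E₀ for all t ∈ [0,T]. Assume furthermore that for every t: ρ₀|ω|²(·,t), (|∂_y ω|²/J)(·,t), (J|h|²)(·,t), and (h·∂_y ω)(·,t) are integrable on ℝ; the map t ↦ ∫_ℝ ρ₀|ω(y,t)|² dy is differentiable with derivative ∫_ℝ 2 ρ₀ ω·∂_t ω dy; and the integration by parts identity ∫_ℝ ρ₀ ω·∂_t ω dy = −μ ∫_ℝ |∂_y ω|²/J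 dy − (1/(4π)) ∫_ℝ h·∂_y ω dy holds (as is valid when the flux μ ω·∂_y ω / J vanishes at y = ±∞). Then for all t ∈ [0,T]: ∫_ℝ ρ₀ |ω(y,t)|² dy + μ ∫₀ᵗ ∫_ℝ (|∂_y ω|²/J)(y,s) dy ds ≤ ∫_ℝ ρ₀ |ω(y,0)|² dy + (E₀/(2πμ)) t. -/
open Real MeasureTheory
open scoped InnerProductSpace

noncomputable section

/-! Testing the transverse momentum equation against `ω` gives
`d/dt ∫ ρ₀|ω|² = -2μ ∫ |∂_y ω|²/J - (1/2π) ∫ h·∂_y ω`. The Cauchy inequality with weight `2πμ`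
bounds the magnetic term by half of the dissipation plus `(1/(16π²μ)) ∫ J|h|² ≤ E₀/(2πμ)`,
so that `d/dt ∫ ρ₀|ω|² + μ ∫ |∂_y ω|²/J ≤ E₀/(2πμ)`; integrating in time gives the estimate. -/

open Set

/-- No integrability of `φ` is needed: otherwise its interval integral is `0`, and `g` is
monotone since `g' ≥ φ ≥ 0`. -/
theorem integral_le_sub_of_hasDerivAt_of_nonneg {g g' φ : ℝ → ℝ} {a b : ℝ} (hab : a ≤ b)
    (hcont : ContinuousOn g (Icc a b)) (hderiv : ∀ x ∈ Ioo a b, HasDerivAt g (g' x) x)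
    (hφ : ∀ x ∈ Ioo a b, 0 ≤ φ x) (hφg : ∀ x ∈ Ioo a b, φ x ≤ g' x) :
    ∫ x in a..b, φ x ≤ g b - g a := by
  have hderiv_right : ∀ x ∈ Ioo a b, HasDerivWithinAt g (g' x) (Ioi x) x :=
    fun x hx => (hderiv x hx).hasDerivWithinAt
  by_cases hint : IntervalIntegrable φ volume a b
  · exact intervalIntegral.integral_le_sub_of_hasDeriv_right_of_le hab hcont hderiv_right
      ((intervalIntegrable_iff_integrableOn_Icc_of_le hab).1 hint) hφg
  · rw [intervalIntegral.integral_undef hint]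
    simpa using intervalIntegral.integral_le_sub_of_hasDeriv_right_of_le (φ := 0) hab hcont
      hderiv_right integrableOn_zero fun x hx => (hφ x hx).trans (hφg x hx)

theorem abs_real_inner_le_mul_sq_div_add {E : Type*} [NormedAddCommGroup E]
    [InnerProductSpace ℝ E] (x y : E) {J ε : ℝ} (hJ : 0 < J) (hε : 0 < ε) :
    |⟪x, y⟫_ℝ| ≤ ε * (‖y‖ ^ 2 / J) + J * ‖x‖ ^ 2 / (4 * ε) := by
  have hsq : ‖x‖ * ‖y‖ ≤ ε * (‖y‖ ^ 2 / J) + J * ‖x‖ ^ 2 / (4 * ε) := by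
    have hrhs : ε * (‖y‖ ^ 2 / J) + J * ‖x‖ ^ 2 / (4 * ε) - ‖x‖ * ‖y‖
        = (2 * ε * ‖y‖ - J * ‖x‖) ^ 2 / (4 * ε * J) := by
      field_simp
      ring
    have : 0 ≤ (2 * ε * ‖y‖ - J * ‖x‖) ^ 2 / (4 * ε * J) := by positivity
    linarith
  exact (abs_real_inner_le_norm x y).trans hsq

theorem abs_integral_inner_le_mul_integral_add {α E : Type*} [MeasurableSpace α]
    {μ : Measure α} [NormedAddCommGroup E] [InnerProductSpace ℝ E] {f g : α → E} {J : α → ℝ}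
    {ε : ℝ} (hε : 0 < ε) (hJ : ∀ x, 0 < J x) (hg : Integrable (fun x => ‖g x‖ ^ 2 / J x) μ)
    (hf : Integrable (fun x => J x * ‖f x‖ ^ 2) μ) :
    |∫ x, ⟪f x, g x⟫_ℝ ∂μ|
      ≤ ε * ∫ x, ‖g x‖ ^ 2 / J x ∂μ + (∫ x, J x * ‖f x‖ ^ 2 ∂μ) / (4 * ε) := by
  calc |∫ x, ⟪f x, g x⟫_ℝ ∂μ|
      ≤ ∫ x, (ε * (‖g x‖ ^ 2 / J x) + J x * ‖f x‖ ^ 2 / (4 * ε)) ∂μ := by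
        rw [← Real.norm_eq_abs]
        exact norm_integral_le_of_norm_le ((hg.const_mul ε).fun_add (hf.div_const _))
          (.of_forall fun x => abs_real_inner_le_mul_sq_div_add (f x) (g x) (hJ x) hε)
    _ = ε * ∫ x, ‖g x‖ ^ 2 / J x ∂μ + (∫ x, J x * ‖f x‖ ^ 2 ∂μ) / (4 * ε) := by
      rw [integral_add (hg.const_mul ε) (hf.div_const _), integral_const_mul, integral_div]

theorem energy_rate_add_dissipation_le {μ G H X E₀ : ℝ} (hμ : 0 < μ)
    (hH : |H| ≤ 2 * π * μ * G + X / (4 * (2 * π * μ))) (hX : X ≤ 8 * π * E₀) :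
    2 * (-μ * G - 1 / (4 * π) * H) + μ * G ≤ E₀ / (2 * π * μ) := by
  have hmagnetic : X / (4 * (2 * π * μ)) ≤ E₀ / μ := by
    rw [div_le_div_iff₀ (by positivity) hμ]
    nlinarith [pi_pos]
  have hlower : -H ≤ 2 * π * μ * G + E₀ / μ :=
    (neg_le.1 (abs_le.1 hH).1).trans (add_le_add_right hmagnetic _)
  calc 2 * (-μ * G - 1 / (4 * π) * H) + μ * G = 1 / (2 * π) * -H - μ * G := by ring
    _ ≤ 1 / (2 * π) * (2 * π * μ * G + E₀ / μ) - μ * G := by gcongr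
    _ = E₀ / (2 * π * μ) := by field_simp; ring

theorem stmt_17_general (T mu E₀ : ℝ) (hmu : 0 < mu)
    (ρ₀ : ℝ → ℝ)
    (J : ℝ → ℝ → ℝ) (ω h : ℝ → ℝ → E2)
    (hJpos : ∀ y : ℝ, ∀ t ∈ Set.Icc (0 : ℝ) T, 0 < J y t)
    (hhE : ∀ t ∈ Set.Icc (0 : ℝ) T, ∫ y : ℝ, J y t * ‖h y t‖ ^ 2 ≤ 8 * π * E₀)
    (hint2 : ∀ t ∈ Set.Icc (0 : ℝ) T, Integrable (fun y => ‖pdyV ω y t‖ ^ 2 / J y t))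
    (hint3 : ∀ t ∈ Set.Icc (0 : ℝ) T, Integrable (fun y => J y t * ‖h y t‖ ^ 2))
    (hderiv : ∀ t ∈ Set.Icc (0 : ℝ) T,
      HasDerivAt (fun s => ∫ y : ℝ, ρ₀ y * ‖ω y s‖ ^ 2)
        (∫ y : ℝ, 2 * ρ₀ y * ⟪ω y t, pdtV ω y t⟫_ℝ) t)
    (hibp : ∀ t ∈ Set.Icc (0 : ℝ) T,
      ∫ y : ℝ, ρ₀ y * ⟪ω y t, pdtV ω y t⟫_ℝ
        = -mu * (∫ y : ℝ, ‖pdyV ω y t‖ ^ 2 / J y t)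
          - (1 / (4 * π)) * ∫ y : ℝ, ⟪h y t, pdyV ω y t⟫_ℝ) :
    ∀ t ∈ Set.Icc (0 : ℝ) T,
      (∫ y : ℝ, ρ₀ y * ‖ω y t‖ ^ 2)
          + mu * ∫ s in (0:ℝ)..t, ∫ y : ℝ, ‖pdyV ω y s‖ ^ 2 / J y s
        ≤ (∫ y : ℝ, ρ₀ y * ‖ω y 0‖ ^ 2) + (E₀ / (2 * π * mu)) * t := by
  intro t ht
  set F : ℝ → ℝ := fun s => ∫ y : ℝ, ρ₀ y * ‖ω y s‖ ^ 2
  set G : ℝ → ℝ := fun s => ∫ y : ℝ, ‖pdyV ω y s‖ ^ 2 / J y s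
  set C : ℝ := E₀ / (2 * π * mu)
  have hsub : Icc 0 t ⊆ Icc 0 T := Icc_subset_Icc_right ht.2
  have hsub' : Ioo 0 t ⊆ Icc 0 T := Ioo_subset_Icc_self.trans hsub
  have hdiss : ∀ s ∈ Icc 0 T, mu * G s ≤ C - ∫ y : ℝ, 2 * ρ₀ y * ⟪ω y s, pdtV ω y s⟫_ℝ := by
    intro s hs
    have hcauchy := abs_integral_inner_le_mul_integral_add (μ := volume)
      (mul_pos two_pi_pos hmu) (hJpos · s hs) (hint2 s hs) (hint3 s hs)
    simp_rw [mul_assoc, integral_const_mul, hibp s hs]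
    linarith [energy_rate_add_dissipation_le hmu hcauchy (hhE s hs)]
  have hG_nonneg : ∀ s ∈ Icc 0 T, 0 ≤ G s := fun s hs =>
    integral_nonneg fun y => div_nonneg (sq_nonneg _) (hJpos y s hs).le
  have hg : ∀ s ∈ Icc 0 t, HasDerivAt (fun s => C * s - F s)
      (C - ∫ y : ℝ, 2 * ρ₀ y * ⟪ω y s, pdtV ω y s⟫_ℝ) s := fun s hs => by
    simpa using ((hasDerivAt_id' s).const_mul C).fun_sub (hderiv s (hsub hs))
  have key := integral_le_sub_of_hasDerivAt_of_nonneg (φ := fun s => mu * G s) ht.1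
    (fun s hs => (hg s hs).continuousAt.continuousWithinAt)
    (fun s hs => hg s (Ioo_subset_Icc_self hs))
    (fun s hs => mul_nonneg hmu.le (hG_nonneg s (hsub' hs))) (fun s hs => hdiss s (hsub' hs))
  rw [intervalIntegral.integral_const_mul] at key
  linarith

/-- quantitative form of Lemma 3.4 of the paper, a priori estimate on
the transverse velocity: for a classical solution on `ℝ × [0,T]` with `J > 0`, `ρ₀ ≥ 0`,
magnetic energy bound `∫ J|h|² dy ≤ 8πE₀`, the stated integrability assumptions,
differentiation under the integral sign, and the integration-by-parts identity, one has
`∫ ρ₀|ω(·,t)|² + μ ∫₀ᵗ ∫ |∂_y ω|²/J ≤ ∫ ρ₀|ω(·,0)|² + (E₀/(2πμ)) t` for all `t`. -/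
theorem stmt_17 (T lam mu gam E₀ : ℝ) (hT : 0 < T) (hlam : 0 < lam) (hmu : 0 < mu)
    (hgam : 1 < gam) (hE : 0 ≤ E₀)
    (ρ₀ : ℝ → ℝ) (hρnn : ∀ y : ℝ, 0 ≤ ρ₀ y)
    (J u P : ℝ → ℝ → ℝ) (ω h : ℝ → ℝ → E2)
    (hJpos : ∀ y : ℝ, ∀ t ∈ Set.Icc (0 : ℝ) T, 0 < J y t)
    (hsol : IsMHDSolution lam mu gam ρ₀ J u P ω h (Set.Icc 0 T))
    (hhE : ∀ t ∈ Set.Icc (0 : ℝ) T, ∫ y : ℝ, J y t * ‖h y t‖ ^ 2 ≤ 8 * π * E₀)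
    (hint1 : ∀ t ∈ Set.Icc (0 : ℝ) T, Integrable (fun y => ρ₀ y * ‖ω y t‖ ^ 2))
    (hint2 : ∀ t ∈ Set.Icc (0 : ℝ) T, Integrable (fun y => ‖pdyV ω y t‖ ^ 2 / J y t))
    (hint3 : ∀ t ∈ Set.Icc (0 : ℝ) T, Integrable (fun y => J y t * ‖h y t‖ ^ 2))
    (hint4 : ∀ t ∈ Set.Icc (0 : ℝ) T, Integrable (fun y => ⟪h y t, pdyV ω y t⟫_ℝ))
    (hderiv : ∀ t ∈ Set.Icc (0 : ℝ) T,
      HasDerivAt (fun s => ∫ y : ℝ, ρ₀ y * ‖ω y s‖ ^ 2)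
        (∫ y : ℝ, 2 * ρ₀ y * ⟪ω y t, pdtV ω y t⟫_ℝ) t)
    (hibp : ∀ t ∈ Set.Icc (0 : ℝ) T,
      ∫ y : ℝ, ρ₀ y * ⟪ω y t, pdtV ω y t⟫_ℝ
        = -mu * (∫ y : ℝ, ‖pdyV ω y t‖ ^ 2 / J y t)
          - (1 / (4 * π)) * ∫ y : ℝ, ⟪h y t, pdyV ω y t⟫_ℝ) :
    ∀ t ∈ Set.Icc (0 : ℝ) T,
      (∫ y : ℝ, ρ₀ y * ‖ω y t‖ ^ 2)
          + mu * ∫ s in (0:ℝ)..t, ∫ y : ℝ, ‖pdyV ω y s‖ ^ 2 / J y s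
        ≤ (∫ y : ℝ, ρ₀ y * ‖ω y 0‖ ^ 2) + (E₀ / (2 * π * mu)) * t :=
  stmt_17_general T mu E₀ hmu ρ₀ J ω h hJpos hhE hint2 hint3 hderiv hibp
end
end

section
/- Let (J, u, ω, h, P) be a classical solution of the planar non-resistive MHD system in Lagrangian coordinates on ℝ × [0,T] with J > 0 and ρ₀ > 0 everywhere, ρ₀ differentiable, and let F := μ ∂_y ω / J + h/(4π). Assume there is E₀ ≥ 0 with ∫_ℝ ρ₀(y) u(y,t)² dy ≤ 2E₀ for all t. Fix t ∈ [0,T] and assume at time t: J|F|², |∂_y F|²/ρ₀, ρ₀ u² , |∂_y ω|²/J are integrable on ℝ; F(·,t) is bounded; the map s ↦ ∫_ℝ J(y,s)|F(y,s)|² dy is differentiable at t with derivative ∫_ℝ ( ∂_t J |F|² + 2 J F·∂_t F ) dy; and the integration by parts identities ∫_ℝ ( ∂_t J |F|² + 2 J F·∂_t F ) dy + 2μ ∫_ℝ |∂_y F|²/ρ₀ dy = 2∫_ℝ u F·∂_y F dy + (1/(2π)) ∫_ℝ ∂_y ω·F dy hold (as is valid when the relevant fluxes vanish at y = ±∞).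 Then: (d/dt) ∫_ℝ J|F|² dy + 2μ ∫_ℝ |∂_y F|²/ρ₀ dy ≤ 2√(2E₀) ( ∫_ℝ |∂_y F|²/ρ₀ dy )^{1/2} ‖F(·,t)‖_∞ + (1/(2π)) ( ∫_ℝ |∂_y ω|²/J dy )^{1/2} ( ∫_ℝ J|F|² dy )^{1/2}. -/
open Real MeasureTheory
open scoped InnerProductSpace

noncomputable section

/-!
Rewriting the time derivative with the integration-by-parts identity leaves two integrals,
`∫ u F·∂_y F` and `∫ ∂_y ω·F`. Both are estimated by the Cauchy–Schwarz inequality with a weight: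
`ρ₀` for the first, after bounding `|F|` by its supremum, so that the kinetic energy
`∫ ρ₀ u² ≤ 2E₀` appears, and `J` for the second.
-/

section CauchySchwarz

variable {α : Type*} [MeasurableSpace α] {μ : Measure α}

theorem integral_le_sqrt_integral_sq_mul_sqrt_integral_sq {f g k : α → ℝ}
    (hf : Integrable (fun x => f x ^ 2) μ) (hg : Integrable (fun x => g x ^ 2) μ)
    (hk : ∀ x, |k x| ≤ |f x| * |g x|) :
    ∫ x, k x ∂μ ≤ √(∫ x, f x ^ 2 ∂μ) * √(∫ x, g x ^ 2 ∂μ) := by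
  by_cases hki : Integrable k μ
  swap
  -- the integral of a non-integrable function is the junk value `0`
  · rw [integral_undef hki]; positivity
  -- `|f| = √(f²)`, so measurability of `|f|` comes for free from integrability of `f²`.
  have memLp_abs {f : α → ℝ} (hf : Integrable (fun x => f x ^ 2) μ) :
      MemLp (fun x => |f x|) 2 μ := by
    have hm : AEStronglyMeasurable (fun x => |f x|) μ := by
      simpa only [sqrt_sq_eq_abs] using hf.aemeasurable.sqrt.aestronglyMeasurable
    rw [memLp_two_iff_integrable_sq hm]
    simpa only [sq_abs] using hf
  have holder := integral_mul_le_Lp_mul_Lq_of_nonneg HolderConjugate.two_two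
    (ae_of_all _ fun x => abs_nonneg (f x)) (ae_of_all _ fun x => abs_nonneg (g x))
    (by simpa only [ENNReal.ofReal_ofNat] using memLp_abs hf)
    (by simpa only [ENNReal.ofReal_ofNat] using memLp_abs hg)
  simp only [rpow_two, sq_abs, ← sqrt_eq_rpow] at holder
  calc ∫ x, k x ∂μ ≤ ∫ x, |f x| * |g x| ∂μ :=
        integral_mono hki ((memLp_abs hf).integrable_mul (memLp_abs hg))
          fun x => (le_abs_self _).trans (hk x)
    _ ≤ _ := holder

theorem integral_le_sqrt_integral_div_mul_sqrt_integral_mul {w a b k : α → ℝ}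
    (hw : ∀ x, 0 < w x) (ha : Integrable (fun x => a x ^ 2 / w x) μ)
    (hb : Integrable (fun x => w x * b x ^ 2) μ) (hk : ∀ x, |k x| ≤ |a x| * |b x|) :
    ∫ x, k x ∂μ ≤ √(∫ x, a x ^ 2 / w x ∂μ) * √(∫ x, w x * b x ^ 2 ∂μ) := by
  have sq_div x : (a x / √(w x)) ^ 2 = a x ^ 2 / w x := by
    rw [div_pow, sq_sqrt (hw x).le]
  have sq_mul x : (√(w x) * b x) ^ 2 = w x * b x ^ 2 := by
    rw [mul_pow, sq_sqrt (hw x).le]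
  simp only [← sq_div, ← sq_mul] at ha hb ⊢
  refine integral_le_sqrt_integral_sq_mul_sqrt_integral_sq ha hb fun x => ?_
  have hsw : 0 < √(w x) := sqrt_pos.2 (hw x)
  have cancel : |a x| / √(w x) * (√(w x) * |b x|) = |a x| * |b x| := by field_simp
  rw [abs_div, abs_mul, abs_of_pos hsw, cancel]
  exact hk x

variable {E : Type*} [NormedAddCommGroup E] [InnerProductSpace ℝ E]

theorem integral_mul_inner_le_of_norm_le {ρ u : α → ℝ} {F G : α → E} {M : ℝ}
    (hρ : ∀ x, 0 < ρ x) (hM : 0 ≤ M) (hF : ∀ x, ‖F x‖ ≤ M)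
    (hG : Integrable (fun x => ‖G x‖ ^ 2 / ρ x) μ) (hu : Integrable (fun x => ρ x * u x ^ 2) μ) :
    ∫ x, u x * ⟪F x, G x⟫_ℝ ∂μ
      ≤ M * √(∫ x, ‖G x‖ ^ 2 / ρ x ∂μ) * √(∫ x, ρ x * u x ^ 2 ∂μ) := by
  have hMG : Integrable (fun x => (M * ‖G x‖) ^ 2 / ρ x) μ := by
    simpa only [mul_pow, mul_div_assoc] using hG.const_mul (M ^ 2)
  have hcs := integral_le_sqrt_integral_div_mul_sqrt_integral_mul
    (k := fun x => u x * ⟪F x, G x⟫_ℝ) hρ hMG hu fun x => by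
      rw [abs_mul, abs_of_nonneg (mul_nonneg hM (norm_nonneg _)), mul_comm]
      gcongr
      exact (abs_real_inner_le_norm _ _).trans (by gcongr; exact hF x)
  simpa only [mul_pow, mul_div_assoc, integral_const_mul, sqrt_mul (sq_nonneg M),
    sqrt_sq hM] using hcs

theorem integral_inner_le_of_weight {w : α → ℝ} {F G : α → E} (hw : ∀ x, 0 < w x)
    (hF : Integrable (fun x => ‖F x‖ ^ 2 / w x) μ) (hG : Integrable (fun x => w x * ‖G x‖ ^ 2) μ) :
    ∫ x, ⟪F x, G x⟫_ℝ ∂μ ≤ √(∫ x, ‖F x‖ ^ 2 / w x ∂μ) * √(∫ x, w x * ‖G x‖ ^ 2 ∂μ) :=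
  integral_le_sqrt_integral_div_mul_sqrt_integral_mul hw hF hG fun x => by
    simpa only [abs_norm] using abs_real_inner_le_norm (F x) (G x)

end CauchySchwarz

theorem stmt_18_general (T mu E₀ t : ℝ)
    (ρ₀ : ℝ → ℝ) (hρpos : ∀ y : ℝ, 0 < ρ₀ y)
    (J u : ℝ → ℝ → ℝ) (ω h : ℝ → ℝ → E2)
    (hJpos : ∀ y : ℝ, ∀ s ∈ Set.Icc (0 : ℝ) T, 0 < J y s)
    (huE : ∀ s ∈ Set.Icc (0 : ℝ) T, ∫ y : ℝ, ρ₀ y * (u y s) ^ 2 ≤ 2 * E₀)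
    (ht : t ∈ Set.Icc (0 : ℝ) T)
    (hint1 : Integrable (fun y => J y t * ‖Fflux mu J ω h y t‖ ^ 2))
    (hint2 : Integrable (fun y => ‖pdyV (Fflux mu J ω h) y t‖ ^ 2 / ρ₀ y))
    (hint3 : Integrable (fun y => ρ₀ y * (u y t) ^ 2))
    (hint4 : Integrable (fun y => ‖pdyV ω y t‖ ^ 2 / J y t))
    (hFbdd : BddAbove (Set.range fun y => ‖Fflux mu J ω h y t‖))
    (hderiv : HasDerivAt (fun s => ∫ y : ℝ, J y s * ‖Fflux mu J ω h y s‖ ^ 2)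
      (∫ y : ℝ, (pdt J y t * ‖Fflux mu J ω h y t‖ ^ 2
        + 2 * J y t * ⟪Fflux mu J ω h y t, pdtV (Fflux mu J ω h) y t⟫_ℝ)) t)
    (hibp : (∫ y : ℝ, (pdt J y t * ‖Fflux mu J ω h y t‖ ^ 2
          + 2 * J y t * ⟪Fflux mu J ω h y t, pdtV (Fflux mu J ω h) y t⟫_ℝ))
          + 2 * mu * ∫ y : ℝ, ‖pdyV (Fflux mu J ω h) y t‖ ^ 2 / ρ₀ y
        = 2 * (∫ y : ℝ, u y t * ⟪Fflux mu J ω h y t, pdyV (Fflux mu J ω h) y t⟫_ℝ)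
          + (1 / (2 * π)) * ∫ y : ℝ, ⟪pdyV ω y t, Fflux mu J ω h y t⟫_ℝ) :
    deriv (fun s => ∫ y : ℝ, J y s * ‖Fflux mu J ω h y s‖ ^ 2) t
        + 2 * mu * ∫ y : ℝ, ‖pdyV (Fflux mu J ω h) y t‖ ^ 2 / ρ₀ y
      ≤ 2 * Real.sqrt (2 * E₀)
            * Real.sqrt (∫ y : ℝ, ‖pdyV (Fflux mu J ω h) y t‖ ^ 2 / ρ₀ y)
            * (⨆ y : ℝ, ‖Fflux mu J ω h y t‖)
        + (1 / (2 * π)) * Real.sqrt (∫ y : ℝ, ‖pdyV ω y t‖ ^ 2 / J y t)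
            * Real.sqrt (∫ y : ℝ, J y t * ‖Fflux mu J ω h y t‖ ^ 2) := by
  set F := Fflux mu J ω h
  have hFsup : ∀ y, ‖F y t‖ ≤ ⨆ y, ‖F y t‖ := le_ciSup hFbdd
  have hM : 0 ≤ ⨆ y, ‖F y t‖ := (norm_nonneg _).trans (hFsup 0)
  have hA := integral_mul_inner_le_of_norm_le hρpos hM hFsup hint2 hint3
  have hB := integral_inner_le_of_weight (fun y => hJpos y t ht) hint4 hint1
  have hE := sqrt_le_sqrt (huE t ht)
  rw [hderiv.deriv, hibp]
  calc _ ≤ 2 * ((⨆ y, ‖F y t‖) * √(∫ y, ‖pdyV F y t‖ ^ 2 / ρ₀ y) * √(2 * E₀))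
        + 1 / (2 * π) * (√(∫ y, ‖pdyV ω y t‖ ^ 2 / J y t) * √(∫ y, J y t * ‖F y t‖ ^ 2)) := by
        gcongr
        exact hA.trans (by gcongr)
    _ = _ := by ring

/-- key differential inequality in the proof of Lemma 3.5 of the
paper: for a classical solution on `ℝ × [0,T]` with `J > 0`, `ρ₀ > 0`, `ρ₀`
differentiable, kinetic energy bound `∫ ρ₀ u² ≤ 2E₀`, and, at a fixed time `t`, the
stated integrability, boundedness, differentiation under the integral sign and
integration-by-parts assumptions, the transverse effective viscous flux
`F = μ ∂_y ω / J + h/(4π)` satisfies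
`(d/dt) ∫ J|F|² + 2μ ∫ |∂_y F|²/ρ₀
   ≤ 2√(2E₀) (∫ |∂_y F|²/ρ₀)^{1/2} ‖F(·,t)‖_∞
     + (1/(2π)) (∫ |∂_y ω|²/J)^{1/2} (∫ J|F|²)^{1/2}`. -/
theorem stmt_18 (T lam mu gam E₀ t : ℝ) (hT : 0 < T) (hlam : 0 < lam) (hmu : 0 < mu)
    (hgam : 1 < gam) (hE : 0 ≤ E₀)
    (ρ₀ : ℝ → ℝ) (hρpos : ∀ y : ℝ, 0 < ρ₀ y) (hρdiff : Differentiable ℝ ρ₀)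
    (J u P : ℝ → ℝ → ℝ) (ω h : ℝ → ℝ → E2)
    (hJpos : ∀ y : ℝ, ∀ s ∈ Set.Icc (0 : ℝ) T, 0 < J y s)
    (hsol : IsMHDSolution lam mu gam ρ₀ J u P ω h (Set.Icc 0 T))
    (huE : ∀ s ∈ Set.Icc (0 : ℝ) T, ∫ y : ℝ, ρ₀ y * (u y s) ^ 2 ≤ 2 * E₀)
    (ht : t ∈ Set.Icc (0 : ℝ) T)
    (hint1 : Integrable (fun y => J y t * ‖Fflux mu J ω h y t‖ ^ 2))
    (hint2 : Integrable (fun y => ‖pdyV (Fflux mu J ω h) y t‖ ^ 2 / ρ₀ y))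
    (hint3 : Integrable (fun y => ρ₀ y * (u y t) ^ 2))
    (hint4 : Integrable (fun y => ‖pdyV ω y t‖ ^ 2 / J y t))
    (hFbdd : BddAbove (Set.range fun y => ‖Fflux mu J ω h y t‖))
    (hderiv : HasDerivAt (fun s => ∫ y : ℝ, J y s * ‖Fflux mu J ω h y s‖ ^ 2)
      (∫ y : ℝ, (pdt J y t * ‖Fflux mu J ω h y t‖ ^ 2
        + 2 * J y t * ⟪Fflux mu J ω h y t, pdtV (Fflux mu J ω h) y t⟫_ℝ)) t)
    (hibp : (∫ y : ℝ, (pdt J y t * ‖Fflux mu J ω h y t‖ ^ 2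
          + 2 * J y t * ⟪Fflux mu J ω h y t, pdtV (Fflux mu J ω h) y t⟫_ℝ))
          + 2 * mu * ∫ y : ℝ, ‖pdyV (Fflux mu J ω h) y t‖ ^ 2 / ρ₀ y
        = 2 * (∫ y : ℝ, u y t * ⟪Fflux mu J ω h y t, pdyV (Fflux mu J ω h) y t⟫_ℝ)
          + (1 / (2 * π)) * ∫ y : ℝ, ⟪pdyV ω y t, Fflux mu J ω h y t⟫_ℝ) :
    deriv (fun s => ∫ y : ℝ, J y s * ‖Fflux mu J ω h y s‖ ^ 2) t
        + 2 * mu * ∫ y : ℝ, ‖pdyV (Fflux mu J ω h) y t‖ ^ 2 / ρ₀ y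
      ≤ 2 * Real.sqrt (2 * E₀)
            * Real.sqrt (∫ y : ℝ, ‖pdyV (Fflux mu J ω h) y t‖ ^ 2 / ρ₀ y)
            * (⨆ y : ℝ, ‖Fflux mu J ω h y t‖)
        + (1 / (2 * π)) * Real.sqrt (∫ y : ℝ, ‖pdyV ω y t‖ ^ 2 / J y t)
            * Real.sqrt (∫ y : ℝ, J y t * ‖Fflux mu J ω h y t‖ ^ 2) :=
  stmt_18_general T mu E₀ t ρ₀ hρpos J u ω h hJpos huE ht hint1 hint2 hint3 hint4 hFbdd hderiv hibp
end
end
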